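/- arXiv:2307.04191 — 3 statements merged into one kernel-verified Lean document; each statement's English description precedes it below -/
import Mathlib

section
/- In the logistic regression model with parameter θ* ∈ S^{d−1} and inverse temperature β > 0, the error rate of the homogeneous linear classifier h_{θ*} satisfies err_{θ*}(θ*) = P(y·xᵀθ* ≤ 0) ≤ (1/β)·√(2/π). -/
/-!
Given `x`, the label disagrees with the sign of `t = ⟪x, θ⟫` with probability `σ(-β |t|) ≤ exp (-β |t|)`,
where `σ` is the logistic function. Under the standard Gaussian, `t` is standard normal, its density is
at most `1 / √(2π)`, and `∫ exp (-β |t|) dt = 2 / β`.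
-/

open MeasureTheory ProbabilityTheory Real

noncomputable def stdGaussian (d : ℕ) : Measure (EuclideanSpace ℝ (Fin d)) :=
  (Measure.pi fun _ : Fin d => gaussianReal 0 1).map (EuclideanSpace.equiv (Fin d) ℝ).symm

noncomputable def logistic (η : ℝ) : ℝ := 1 / (1 + Real.exp (-η))

noncomputable def logisticModel (d : ℕ) (β : ℝ) (θ : EuclideanSpace ℝ (Fin d)) :
    Measure (EuclideanSpace ℝ (Fin d) × ℝ) :=
  (stdGaussian d).bind fun x =>
    ENNReal.ofReal (logistic (β * (inner ℝ x θ : ℝ))) • Measure.dirac (x, (1:ℝ))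
      + ENNReal.ofReal (1 - logistic (β * (inner ℝ x θ : ℝ))) • Measure.dirac (x, (-1:ℝ))

lemma logistic_le_exp (v : ℝ) : logistic v ≤ exp v := by
  rw [logistic, ← inv_inv (exp v), ← exp_neg, one_div]
  exact inv_anti₀ (exp_pos _) (le_add_of_nonneg_left zero_le_one)

lemma one_sub_logistic (v : ℝ) : 1 - logistic v = logistic (-v) := by
  simp only [logistic, neg_neg, exp_neg]
  field_simp
  ring

lemma logistic_zero : logistic 0 = 1 / 2 := by norm_num [logistic]

lemma misclassification_prob_le (β : ℝ) {d : ℕ} (θ x : EuclideanSpace ℝ (Fin d)) :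
    (ENNReal.ofReal (logistic (β * inner ℝ x θ)) • Measure.dirac (x, (1 : ℝ))
      + ENNReal.ofReal (1 - logistic (β * inner ℝ x θ)) • Measure.dirac (x, (-1 : ℝ)))
        {p | p.2 * inner ℝ p.1 θ ≤ 0}
      ≤ ENNReal.ofReal (exp (-(β * |inner ℝ x θ|))) := by
  simp only [Measure.coe_add, Measure.coe_smul, Pi.add_apply, Pi.smul_apply, Measure.dirac_apply,
    smul_eq_mul, Set.indicator_apply, Set.mem_ofPred_eq, one_mul, neg_one_mul, neg_nonpos,
    Pi.one_apply, mul_ite, mul_one, mul_zero]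
  rcases lt_trichotomy (inner ℝ x θ) 0 with h | h | h
  · simp only [h.le, h.not_ge, if_true, if_false, add_zero, abs_of_neg h, mul_neg, neg_neg]
    exact ENNReal.ofReal_le_ofReal (logistic_le_exp _)
  · simp only [h, le_refl, if_true, mul_zero, abs_zero, neg_zero, exp_zero, logistic_zero]
    rw [← ENNReal.ofReal_add (by norm_num) (by norm_num)]
    norm_num
  · simp only [h.le, h.not_ge, if_true, if_false, zero_add, abs_of_pos h, one_sub_logistic]
    exact ENNReal.ofReal_le_ofReal (logistic_le_exp _)

lemma logisticModel_misclassified_le (d : ℕ) (β : ℝ) (θ : EuclideanSpace ℝ (Fin d)) :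
    logisticModel d β θ {p | p.2 * inner ℝ p.1 θ ≤ 0}
      ≤ ∫⁻ x, ENNReal.ofReal (exp (-(β * |inner ℝ x θ|))) ∂_root_.stdGaussian d :=
  (Measure.bind_apply_le _ (measurableSet_le (by fun_prop) (by fun_prop))).trans
    (lintegral_mono fun x => misclassification_prob_le β θ x)

lemma stdGaussian_eq_stdGaussian_euclideanSpace (d : ℕ) :
    _root_.stdGaussian d = ProbabilityTheory.stdGaussian (EuclideanSpace ℝ (Fin d)) :=
  map_pi_eq_stdGaussian

lemma map_inner_stdGaussian {E : Type*} [NormedAddCommGroup E] [InnerProductSpace ℝ E]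
    [FiniteDimensional ℝ E] [MeasurableSpace E] [BorelSpace E] (θ : E) :
    (ProbabilityTheory.stdGaussian E).map (fun x => inner ℝ x θ) = gaussianReal 0 (‖θ‖₊ ^ 2) := by
  have h : (fun x => inner ℝ x θ) = ⇑(innerSL ℝ θ) := by
    funext x
    simp [real_inner_comm]
  rw [h, IsGaussian.map_eq_gaussianReal, integral_strongDual_stdGaussian,
    variance_dual_stdGaussian, innerSL_apply_norm]
  congr
  ext
  simp

lemma gaussianPDFReal_le (μ : ℝ) (v : NNReal) (x : ℝ) :
    gaussianPDFReal μ v x ≤ (√(2 * π * v))⁻¹ := by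
  rw [gaussianPDFReal_def]
  refine mul_le_of_le_one_right (by positivity) (exp_le_one_iff.mpr ?_)
  exact div_nonpos_of_nonpos_of_nonneg (neg_nonpos.mpr (sq_nonneg _)) (by positivity)

lemma integral_exp_neg_mul_abs {b : ℝ} (hb : 0 < b) : ∫ t, exp (-(b * |t|)) = 2 / b := by
  rw [integral_comp_abs (f := fun t => exp (-(b * t))),
    integral_comp_mul_left_Ioi (fun t => exp (-t)) 0 hb, mul_zero, integral_exp_neg_Ioi_zero]
  simp [div_eq_mul_inv]

lemma lintegral_exp_neg_mul_abs {b : ℝ} (hb : 0 < b) :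
    ∫⁻ t, ENNReal.ofReal (exp (-(b * |t|))) = ENNReal.ofReal (2 / b) := by
  have hint : Integrable fun t : ℝ => exp (-(b * |t|)) :=
    .of_integral_ne_zero (by rw [integral_exp_neg_mul_abs hb]; positivity)
  rw [← integral_exp_neg_mul_abs hb,
    ofReal_integral_eq_lintegral_ofReal hint (.of_forall fun t => (exp_pos _).le)]

lemma lintegral_exp_neg_mul_abs_gaussianReal_le {β : ℝ} (hβ : 0 < β) :
    ∫⁻ t, ENNReal.ofReal (exp (-(β * |t|))) ∂gaussianReal 0 1
      ≤ ENNReal.ofReal ((1 / β) * √(2 / π)) := by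
  have hmeas : Measurable fun t : ℝ => ENNReal.ofReal (exp (-(β * |t|))) := by fun_prop
  calc ∫⁻ t, ENNReal.ofReal (exp (-(β * |t|))) ∂gaussianReal 0 1
      = ∫⁻ t, gaussianPDF 0 1 t * ENNReal.ofReal (exp (-(β * |t|))) := by
        rw [gaussianReal_of_var_ne_zero _ one_ne_zero,
          lintegral_withDensity_eq_lintegral_mul _ (measurable_gaussianPDF 0 1) hmeas]
        rfl
    _ ≤ ∫⁻ t, ENNReal.ofReal (√(2 * π))⁻¹ * ENNReal.ofReal (exp (-(β * |t|))) := by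
        gcongr with t
        rw [gaussianPDF_def]
        refine ENNReal.ofReal_le_ofReal ?_
        simpa only [NNReal.coe_one, mul_one] using gaussianPDFReal_le 0 1 t
    _ = ENNReal.ofReal ((√(2 * π))⁻¹ * (2 / β)) := by
        rw [lintegral_const_mul _ hmeas, lintegral_exp_neg_mul_abs hβ,
          ENNReal.ofReal_mul (by positivity)]
    _ = ENNReal.ofReal ((1 / β) * √(2 / π)) := by
        have hsqrt : √(2 * π) * √(2 / π) = 2 := by
          rw [← sqrt_mul (by positivity), show 2 * π * (2 / π) = 2 ^ 2 by field_simp,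
            sqrt_sq zero_le_two]
        have hpos : 0 < √(2 * π) := by positivity
        congr 1
        field_simp
        exact hsqrt.symm

/-- Error rate of the Bayes-optimal homogeneous linear classifier (Lemma 4):
err_{θ*}(θ*) = P(y·xᵀθ* ≤ 0) ≤ (1/β)·√(2/π). -/
theorem stmt5 (d : ℕ) (β : ℝ) (hβ : 0 < β)
    (θstar : EuclideanSpace ℝ (Fin d)) (hθstar : ‖θstar‖ = 1) :
    logisticModel d β θstar {p | p.2 * (inner ℝ p.1 θstar : ℝ) ≤ 0}
      ≤ ENNReal.ofReal ((1 / β) * Real.sqrt (2 / π)) := by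
  have hlaw : (_root_.stdGaussian d).map (fun x => inner ℝ x θstar) = gaussianReal 0 1 := by
    have hθ : ‖θstar‖₊ = 1 := NNReal.eq hθstar
    rw [stdGaussian_eq_stdGaussian_euclideanSpace, map_inner_stdGaussian, hθ, one_pow]
  calc logisticModel d β θstar {p | p.2 * inner ℝ p.1 θstar ≤ 0}
      ≤ ∫⁻ x, ENNReal.ofReal (exp (-(β * |inner ℝ x θstar|))) ∂_root_.stdGaussian d :=
        logisticModel_misclassified_le d β θstar
    _ = ∫⁻ t, ENNReal.ofReal (exp (-(β * |t|))) ∂gaussianReal 0 1 := by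
        rw [← hlaw, lintegral_map (by fun_prop) (by fun_prop)]
    _ ≤ ENNReal.ofReal ((1 / β) * √(2 / π)) := lintegral_exp_neg_mul_abs_gaussianReal_le hβ
end

section
/- Let z and z' be standard normal random variables with correlation ρ ∈ [−1,1], and let β > 0. Then E[ KL( Bernoulli(g'(βz)) ‖ Bernoulli(g'(βz')) ) ] = β²·(1−ρ)·E[ g''(βz) ], where g''(η) = 1/((1+e^{η})(1+e^{−η})) is the second derivative of the log partition function g(η) = ln(1+e^{η}). -/
open MeasureTheory ProbabilityTheory Real

/-- Second derivative of the log partition function `g(η) = ln(1 + e^η)`. -/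
noncomputable def logPartition'' (η : ℝ) : ℝ :=
  1 / ((1 + Real.exp η) * (1 + Real.exp (-η)))

/-- Kullback–Leibler divergence between Bernoulli distributions (on {-1,1}) with
mean parameters p and q. -/
noncomputable def klBernoulli (p q : ℝ) : ℝ :=
  p * Real.log (p / q) + (1 - p) * Real.log ((1 - p) / (1 - q))

/-!
Write `g = softplus` and `σ = g' = sigmoid`. In natural parameters the Bernoulli KL divergence is
the Bregman divergence of `g`: `KL(σ a ‖ σ b) = g b - g a - σ a · (b - a)`. With
`z' = ρ z + √(1 - ρ²) z⊥`, both `z` and `z'` are standard normal, so the `g`-terms cancel in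
expectation, and `z⊥` is centred and independent of `z`, so only
`β (1 - ρ) E[z σ(β z)]` survives. Stein's lemma `E[z f(z)] = E[f'(z)]` turns this into
`β² (1 - ρ) E[g''(β z)]`.
-/

open scoped NNReal

lemma logistic_eq_sigmoid : logistic = sigmoid := by
  funext η; rw [logistic, sigmoid_def, one_div]

lemma logPartition''_eq_sigmoid_mul_sigmoid_neg (η : ℝ) :
    logPartition'' η = sigmoid η * sigmoid (-η) := by
  rw [logPartition'', sigmoid_def, sigmoid_def, neg_neg, one_div, mul_inv, mul_comm]

lemma hasDerivAt_sigmoid_logPartition'' (η : ℝ) : HasDerivAt sigmoid (logPartition'' η) η := by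
  rw [logPartition''_eq_sigmoid_mul_sigmoid_neg, sigmoid_neg]
  exact hasDerivAt_sigmoid η

lemma abs_logPartition''_le_one (η : ℝ) : |logPartition'' η| ≤ 1 := by
  rw [logPartition''_eq_sigmoid_mul_sigmoid_neg,
    abs_of_nonneg (mul_nonneg (sigmoid_nonneg _) (sigmoid_nonneg _))]
  exact mul_le_one₀ (sigmoid_le_one η) (sigmoid_nonneg _) (sigmoid_le_one _)

@[fun_prop]
lemma continuous_logPartition'' : Continuous logPartition'' := by
  simp only [funext logPartition''_eq_sigmoid_mul_sigmoid_neg]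
  fun_prop

noncomputable def softplus (η : ℝ) : ℝ := log (1 + exp η)

lemma softplus_neg (η : ℝ) : softplus (-η) = softplus η - η := by
  have : 1 + exp (-η) = exp (-η) * (1 + exp η) := by
    rw [mul_add, mul_one, ← exp_add, neg_add_cancel, exp_zero, add_comm]
  rw [softplus, softplus, this, log_mul (exp_ne_zero _) (by positivity), log_exp]
  ring

lemma log_sigmoid (η : ℝ) : log (sigmoid η) = -softplus (-η) := by
  rw [sigmoid_def, log_inv, softplus]

lemma softplus_nonneg (η : ℝ) : 0 ≤ softplus η :=
  log_nonneg (by linarith [exp_pos η])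

lemma softplus_le_exp (η : ℝ) : softplus η ≤ exp η := by
  rw [softplus]
  linarith [log_le_sub_one_of_pos (by positivity : 0 < 1 + exp η)]

@[fun_prop]
lemma continuous_softplus : Continuous softplus :=
  (continuous_const.add continuous_exp).log fun η => (add_pos one_pos (exp_pos η)).ne'

lemma klBernoulli_sigmoid (a b : ℝ) :
    klBernoulli (sigmoid a) (sigmoid b) = softplus b - softplus a - (b - a) * sigmoid a := by
  rw [klBernoulli, ← sigmoid_neg, ← sigmoid_neg,
    log_div (sigmoid_pos a).ne' (sigmoid_pos b).ne',
    log_div (sigmoid_pos _).ne' (sigmoid_pos _).ne', log_sigmoid, log_sigmoid, log_sigmoid,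
    log_sigmoid, neg_neg, neg_neg, softplus_neg, softplus_neg, sigmoid_neg]
  ring

lemma norm_sigmoid_le_one (η : ℝ) : ‖sigmoid η‖ ≤ 1 := by
  rw [norm_of_nonneg (sigmoid_nonneg η)]
  exact sigmoid_le_one η

section Integrability

variable {X : Type*} [MeasurableSpace X] {ν : Measure X} {f g : X → ℝ}

lemma integrable_sigmoid_comp [IsFiniteMeasure ν] (hg : AEStronglyMeasurable g ν) :
    Integrable (fun x => sigmoid (g x)) ν :=
  .of_bound (continuous_sigmoid.comp_aestronglyMeasurable hg) 1
    (ae_of_all _ fun _ => norm_sigmoid_le_one _)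

lemma MeasureTheory.Integrable.mul_sigmoid_comp (hf : Integrable f ν)
    (hg : AEStronglyMeasurable g ν) : Integrable (fun x => f x * sigmoid (g x)) ν :=
  hf.mul_bdd (continuous_sigmoid.comp_aestronglyMeasurable hg)
    (ae_of_all _ fun _ => norm_sigmoid_le_one _)

end Integrability

lemma MeasureTheory.MeasurePreserving.integral_comp_of_aestronglyMeasurable {α β E : Type*}
    [MeasurableSpace α] [MeasurableSpace β] [NormedAddCommGroup E] [NormedSpace ℝ E]
    {μ : Measure α} {ν : Measure β} {f : α → β} (hf : MeasurePreserving f μ ν)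
    {g : β → E} (hg : AEStronglyMeasurable g ν) : ∫ x, g (f x) ∂μ = ∫ y, g y ∂ν :=
  hf.hasLaw.integral_comp hg

section Gaussian

variable {μ : ℝ} {v : ℝ≥0}

lemma integrable_id_gaussianReal : Integrable (fun x => x) (gaussianReal μ v) :=
  memLp_one_iff_integrable.mp (memLp_id_gaussianReal' 1 ENNReal.one_ne_top)

lemma integrable_softplus_mul_gaussianReal (t : ℝ) :
    Integrable (fun x => softplus (t * x)) (gaussianReal μ v) := by
  refine (integrable_exp_mul_gaussianReal t).mono' (by fun_prop) (ae_of_all _ fun x => ?_)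
  rw [norm_of_nonneg (softplus_nonneg _)]
  exact softplus_le_exp _

lemma gaussianReal_prod_map_linear (a b m₁ m₂ : ℝ) (v₁ v₂ : ℝ≥0) :
    ((gaussianReal m₁ v₁).prod (gaussianReal m₂ v₂)).map (fun p => a * p.1 + b * p.2)
      = gaussianReal (a * m₁ + b * m₂)
          (.mk (a ^ 2) (sq_nonneg a) * v₁ + .mk (b ^ 2) (sq_nonneg b) * v₂) := by
  rw [← gaussianReal_conv_gaussianReal, ← gaussianReal_map_const_mul a,
    ← gaussianReal_map_const_mul b, Measure.conv,
    Measure.map_prod_map _ _ (by fun_prop) (by fun_prop),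
    Measure.map_map (by fun_prop) (by fun_prop)]
  rfl

lemma measurePreserving_gaussianReal_rotation {a b : ℝ} (h : a ^ 2 + b ^ 2 = 1) :
    MeasurePreserving (fun p : ℝ × ℝ => a * p.1 + b * p.2)
      ((gaussianReal 0 1).prod (gaussianReal 0 1)) (gaussianReal 0 1) := by
  refine ⟨by fun_prop, ?_⟩
  rw [gaussianReal_prod_map_linear, mul_zero, mul_zero, add_zero, mul_one, mul_one]
  congr
  ext
  simpa using h

lemma hasDerivAt_gaussianPDFReal (hv : v ≠ 0) (x : ℝ) :
    HasDerivAt (gaussianPDFReal μ v) (-((x - μ) / v) * gaussianPDFReal μ v x) x := by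
  have hv' : (v : ℝ) ≠ 0 := NNReal.coe_ne_zero.mpr hv
  have h : HasDerivAt (fun y => -(y - μ) ^ 2 / (2 * v)) (-((x - μ) / v)) x := by
    refine ((((hasDerivAt_id x).sub_const μ).pow 2).neg.div_const (2 * (v : ℝ))).congr_deriv ?_
    field_simp
    simp
  simp_rw [gaussianPDFReal_def]
  exact (h.exp.const_mul _).congr_deriv (by ring)

lemma integrable_gaussianReal_iff (hv : v ≠ 0) {f : ℝ → ℝ} :
    Integrable f (gaussianReal μ v) ↔ Integrable (fun x => gaussianPDFReal μ v x * f x) := by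
  rw [gaussianReal_of_var_ne_zero _ hv, integrable_withDensity_iff_integrable_smul'
    (measurable_gaussianPDF μ v) (ae_of_all _ fun _ => gaussianPDF_lt_top)]
  simp only [toReal_gaussianPDF, smul_eq_mul]

/-- Stein's lemma. -/
theorem integral_sub_mul_gaussianReal (hv : v ≠ 0) {f f' : ℝ → ℝ}
    (hf : ∀ x, HasDerivAt f (f' x) x) (hfi : Integrable f (gaussianReal μ v))
    (hf'i : Integrable f' (gaussianReal μ v))
    (hxf : Integrable (fun x => (x - μ) * f x) (gaussianReal μ v)) :
    ∫ x, (x - μ) * f x ∂gaussianReal μ v = v * ∫ x, f' x ∂gaussianReal μ v := by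
  rw [integrable_gaussianReal_iff hv] at hfi hf'i hxf
  have hparts := integral_mul_deriv_eq_deriv_mul_of_integrable
    (u := f) (v := gaussianPDFReal μ v) (fun x _ => hf x)
    (fun x _ => hasDerivAt_gaussianPDFReal hv x)
    ((hxf.const_mul (-(v : ℝ)⁻¹)).congr
      (ae_of_all _ fun x => by simp only [Pi.mul_apply]; ring))
    (hf'i.congr (ae_of_all _ fun x => mul_comm _ _))
    (hfi.congr (ae_of_all _ fun x => mul_comm _ _))
  have hv' : (v : ℝ) ≠ 0 := NNReal.coe_ne_zero.mpr hv
  simp only [integral_gaussianReal_eq_integral_smul hv, smul_eq_mul]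
  calc ∫ x, gaussianPDFReal μ v x * ((x - μ) * f x)
      = -(v * ∫ x, f x * (-((x - μ) / v) * gaussianPDFReal μ v x)) := by
        rw [← integral_const_mul, ← integral_neg]
        congr 1 with x
        field_simp
    _ = v * ∫ x, gaussianPDFReal μ v x * f' x := by
        simp only [hparts, mul_neg, neg_neg, mul_comm (f' _)]

lemma integral_sub_mul_sigmoid_gaussianReal (hv : v ≠ 0) (t : ℝ) :
    ∫ x, (x - μ) * sigmoid (t * x) ∂gaussianReal μ v
      = v * t * ∫ x, logPartition'' (t * x) ∂gaussianReal μ v := by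
  have hderiv (x : ℝ) : HasDerivAt (fun x => sigmoid (t * x)) (logPartition'' (t * x) * t) x :=
    (hasDerivAt_sigmoid_logPartition'' (t * x)).comp x
      (by simpa using (hasDerivAt_id x).const_mul t)
  rw [integral_sub_mul_gaussianReal hv hderiv, integral_mul_const, mul_assoc, mul_comm t]
  · exact integrable_sigmoid_comp (by fun_prop)
  · exact Integrable.of_bound (by fun_prop) |t| (ae_of_all _ fun x => by
      rw [norm_mul, norm_eq_abs, norm_eq_abs]
      exact mul_le_of_le_one_left (abs_nonneg t) (abs_logPartition''_le_one _))
  · exact (integrable_id_gaussianReal.sub (integrable_const μ)).mul_sigmoid_comp (by fun_prop)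

end Gaussian

lemma integrable_softplus_rotation_sub {a b : ℝ} (hab : a ^ 2 + b ^ 2 = 1) (t : ℝ) :
    Integrable (fun w : ℝ × ℝ => softplus (t * (a * w.1 + b * w.2)) - softplus (t * w.1))
      ((gaussianReal 0 1).prod (gaussianReal 0 1)) :=
  have hG := integrable_softplus_mul_gaussianReal (μ := 0) (v := 1) t
  ((measurePreserving_gaussianReal_rotation hab).integrable_comp_of_integrable hG).sub
    (measurePreserving_fst.integrable_comp_of_integrable hG)

lemma integral_softplus_rotation_sub {a b : ℝ} (hab : a ^ 2 + b ^ 2 = 1) (t : ℝ) :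
    ∫ w : ℝ × ℝ, softplus (t * (a * w.1 + b * w.2)) - softplus (t * w.1)
      ∂(gaussianReal 0 1).prod (gaussianReal 0 1) = 0 := by
  have hG := integrable_softplus_mul_gaussianReal (μ := 0) (v := 1) t
  have hrot := measurePreserving_gaussianReal_rotation hab
  have hA : Integrable (fun w : ℝ × ℝ => softplus (t * (a * w.1 + b * w.2)))
      ((gaussianReal 0 1).prod (gaussianReal 0 1)) :=
    hrot.integrable_comp_of_integrable hG
  have hB : Integrable (fun w : ℝ × ℝ => softplus (t * w.1))
      ((gaussianReal 0 1).prod (gaussianReal 0 1)) :=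
    measurePreserving_fst.integrable_comp_of_integrable hG
  rw [integral_sub hA hB,
    hrot.integral_comp_of_aestronglyMeasurable (g := fun z => softplus (t * z)) hG.1,
    measurePreserving_fst.integral_comp_of_aestronglyMeasurable (g := fun z => softplus (t * z))
      hG.1,
    sub_self]

lemma integrable_rotation_sub_mul_sigmoid (a b t : ℝ) :
    Integrable (fun w : ℝ × ℝ => (t * (a * w.1 + b * w.2) - t * w.1) * sigmoid (t * w.1))
      ((gaussianReal 0 1).prod (gaussianReal 0 1)) := by
  have h₁ : Integrable (fun w : ℝ × ℝ => w.1) ((gaussianReal 0 1).prod (gaussianReal 0 1)) :=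
    measurePreserving_fst.integrable_comp_of_integrable integrable_id_gaussianReal
  have h₂ : Integrable (fun w : ℝ × ℝ => w.2) ((gaussianReal 0 1).prod (gaussianReal 0 1)) :=
    measurePreserving_snd.integrable_comp_of_integrable integrable_id_gaussianReal
  exact Integrable.mul_sigmoid_comp (by fun_prop) (by fun_prop)

lemma integral_rotation_sub_mul_sigmoid (a b t : ℝ) :
    ∫ w : ℝ × ℝ, (t * (a * w.1 + b * w.2) - t * w.1) * sigmoid (t * w.1)
        ∂(gaussianReal 0 1).prod (gaussianReal 0 1)
      = t ^ 2 * (a - 1) * ∫ z, logPartition'' (t * z) ∂gaussianReal 0 1 := by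
  have hstein := integral_sub_mul_sigmoid_gaussianReal (μ := 0) one_ne_zero t
  simp only [sub_zero, NNReal.coe_one, one_mul] at hstein
  have hfst : Integrable (fun w : ℝ × ℝ => w.1 * sigmoid (t * w.1))
      ((gaussianReal 0 1).prod (gaussianReal 0 1)) :=
    measurePreserving_fst.integrable_comp_of_integrable
      (integrable_id_gaussianReal.mul_sigmoid_comp (by fun_prop))
  have hsnd : Integrable (fun w : ℝ × ℝ => sigmoid (t * w.1) * w.2)
      ((gaussianReal 0 1).prod (gaussianReal 0 1)) :=
    (integrable_sigmoid_comp (by fun_prop)).mul_prod integrable_id_gaussianReal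
  calc _ = ∫ w : ℝ × ℝ, t * (a - 1) * (w.1 * sigmoid (t * w.1))
          + t * b * (sigmoid (t * w.1) * w.2) ∂(gaussianReal 0 1).prod (gaussianReal 0 1) := by
        congr 1 with w
        ring
    _ = t * (a - 1) * ∫ z, z * sigmoid (t * z) ∂gaussianReal 0 1
          + t * b * ((∫ z, sigmoid (t * z) ∂gaussianReal 0 1)
            * ∫ z, z ∂gaussianReal 0 1) := by
        rw [integral_add (hfst.const_mul _) (hsnd.const_mul _), integral_const_mul,
          integral_const_mul,
          measurePreserving_fst.integral_comp_of_aestronglyMeasurable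
            (g := fun z => z * sigmoid (t * z)) (by fun_prop),
          integral_prod_mul (fun z => sigmoid (t * z)) (fun z => z)]
    _ = _ := by
        rw [hstein, integral_id_gaussianReal]
        ring

theorem stmt12_general (β ρ : ℝ) (hρ : ρ ∈ Set.Icc (-1 : ℝ) 1) :
    ∫ w : ℝ × ℝ, klBernoulli (logistic (β * w.1))
        (logistic (β * (ρ * w.1 + Real.sqrt (1 - ρ ^ 2) * w.2)))
      ∂((gaussianReal 0 1).prod (gaussianReal 0 1))
    = β ^ 2 * (1 - ρ) * ∫ z, logPartition'' (β * z) ∂(gaussianReal 0 1) := by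
  have hab : ρ ^ 2 + √(1 - ρ ^ 2) ^ 2 = 1 := by
    rw [sq_sqrt (by nlinarith [hρ.1, hρ.2])]
    ring
  simp only [logistic_eq_sigmoid, klBernoulli_sigmoid]
  rw [integral_sub (integrable_softplus_rotation_sub hab β)
      (integrable_rotation_sub_mul_sigmoid ρ _ β),
    integral_softplus_rotation_sub hab β, integral_rotation_sub_mul_sigmoid]
  ring

/-- The expected KL divergence between conditional label distributions at correlated
Gaussian inputs equals `β²(1-ρ)·E[g''(βz)]` (identity in the proof of Lemma 17),
where `z` and `z'` are standard normals with correlation `ρ`, realized as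
`z' = ρz + √(1-ρ²)·z⊥`. -/
theorem stmt12 (β ρ : ℝ) (hβ : 0 < β) (hρ : ρ ∈ Set.Icc (-1 : ℝ) 1) :
    ∫ w : ℝ × ℝ, klBernoulli (logistic (β * w.1))
        (logistic (β * (ρ * w.1 + Real.sqrt (1 - ρ ^ 2) * w.2)))
      ∂((gaussianReal 0 1).prod (gaussianReal 0 1))
    = β ^ 2 * (1 - ρ) * ∫ z, logPartition'' (β * z) ∂(gaussianReal 0 1) :=
  stmt12_general β ρ hρ
end

section
/- Let z be a standard normal random variable and β > 0. Then: (i) (1/4)·E[e^{−β|z|}] ≤ E[g''(βz)] ≤ min{1/2, E[e^{−β|z|}]}, where g''(η) = 1/((1+e^{η})(1+e^{−η}))); and (ii) (1/β)·(1 − 1/β²)·√(2/π) ≤ E[e^{−β|z|}] ≤ (1/β)·√(2/π). -/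
/-! With `t = e^{-|η|} ∈ (0, 1]` one has `g''(η) = t / (1 + t)²`, which lies between `t / 4` and
`min t (1 / 4)`; integrating against the Gaussian gives (i). For (ii), symmetry of the Gaussian
turns `E[e^{-β|z|}]` into `√(2/π) ∫₀^∞ e^{-x²/2} e^{-βx} dx`, and `1 - x²/2 ≤ e^{-x²/2} ≤ 1`
together with `∫₀^∞ xⁿ e^{-βx} dx = n! / βⁿ⁺¹` squeezes this integral between `1/β - 1/β³`
and `1/β`. -/

open MeasureTheory ProbabilityTheory Real

open scoped NNReal Nat
open Set

lemma logPartition''_abs (η : ℝ) : logPartition'' |η| = logPartition'' η := by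
  rcases abs_cases η with ⟨h, _⟩ | ⟨h, _⟩ <;> simp only [h, logPartition'', neg_neg, mul_comm]

lemma logPartition''_eq_exp_neg_div (η : ℝ) :
    logPartition'' η = exp (-η) / (1 + exp (-η)) ^ 2 := by
  have hexp : exp η * exp (-η) = 1 := by rw [← exp_add, add_neg_cancel, exp_zero]
  have hden : (1 + exp η) * (1 + exp (-η)) = exp η * (1 + exp (-η)) ^ 2 := by
    linear_combination -(1 + exp (-η)) * hexp
  rw [logPartition'', hden, ← div_div, one_div, ← exp_neg]

lemma logPartition''_eq (η : ℝ) :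
    logPartition'' η = exp (-|η|) / (1 + exp (-|η|)) ^ 2 := by
  rw [← logPartition''_abs, logPartition''_eq_exp_neg_div]

lemma div_one_add_sq_le_quarter {t : ℝ} (ht : 0 ≤ t) : t / (1 + t) ^ 2 ≤ 1 / 4 := by
  rw [div_le_div_iff₀ (by positivity) (by norm_num)]
  nlinarith [sq_nonneg (1 - t)]

lemma div_one_add_sq_le_self {t : ℝ} (ht : 0 ≤ t) : t / (1 + t) ^ 2 ≤ t :=
  div_le_self ht (one_le_pow₀ (by linarith))

lemma div_four_le_div_one_add_sq {t : ℝ} (ht₀ : 0 ≤ t) (ht₁ : t ≤ 1) :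
    t / 4 ≤ t / (1 + t) ^ 2 :=
  div_le_div_of_nonneg_left ht₀ (by positivity) (by nlinarith)

lemma exp_neg_abs_mem_Ioc (η : ℝ) : exp (-|η|) ∈ Ioc 0 1 :=
  ⟨exp_pos _, exp_le_one_iff.2 (neg_nonpos.2 (abs_nonneg η))⟩

lemma logPartition''_nonneg (η : ℝ) : 0 ≤ logPartition'' η := by
  unfold logPartition''; positivity

lemma logPartition''_le_quarter (η : ℝ) : logPartition'' η ≤ 1 / 4 := by
  rw [logPartition''_eq]; exact div_one_add_sq_le_quarter (exp_pos _).le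

lemma logPartition''_le_exp_neg_abs (η : ℝ) : logPartition'' η ≤ exp (-|η|) := by
  rw [logPartition''_eq]; exact div_one_add_sq_le_self (exp_pos _).le

lemma exp_neg_abs_div_four_le_logPartition'' (η : ℝ) : exp (-|η|) / 4 ≤ logPartition'' η := by
  rw [logPartition''_eq]
  exact div_four_le_div_one_add_sq (exp_neg_abs_mem_Ioc η).1.le (exp_neg_abs_mem_Ioc η).2

lemma measurable_logPartition'' : Measurable logPartition'' := by
  unfold logPartition''; fun_prop

lemma integral_gaussianReal_comp_abs (f : ℝ → ℝ) {v : ℝ≥0} (hv : v ≠ 0) :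
    ∫ z, f |z| ∂gaussianReal 0 v
      = √(2 / (π * v)) * ∫ x in Ioi 0, exp (-x ^ 2 / (2 * v)) * f x := by
  have hconst : 2 * (√(2 * π * v))⁻¹ = √(2 / (π * v)) := by
    have hπv : 0 < π * v := by positivity
    rw [show 2 / (π * v) = 2 ^ 2 / (2 * π * v) by field_simp,
      sqrt_div' _ (by positivity), sqrt_sq zero_le_two, div_eq_mul_inv]
  rw [integral_gaussianReal_eq_integral_smul hv]
  set g := fun x ↦ (√(2 * π * v))⁻¹ * (exp (-x ^ 2 / (2 * v)) * f x)
  have hg : (fun z ↦ gaussianPDFReal 0 v z • f |z|) = fun z ↦ g |z| := by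
    ext z; simp [g, gaussianPDFReal, mul_assoc]
  rw [hg, integral_comp_abs (f := g), integral_const_mul, ← mul_assoc, hconst]

lemma integral_pow_mul_exp_neg_mul_Ioi (n : ℕ) {β : ℝ} (hβ : 0 < β) :
    ∫ x in Ioi 0, x ^ n * exp (-(β * x)) = n ! / β ^ (n + 1) := by
  have h := integral_rpow_mul_exp_neg_mul_Ioi (a := n + 1) (by positivity) hβ
  rw [Real.Gamma_nat_eq_factorial, add_sub_cancel_right] at h
  norm_cast at h
  rw [h, one_div_pow, one_div_mul_eq_div]

lemma integrableOn_pow_mul_exp_neg_mul_Ioi (n : ℕ) {β : ℝ} (hβ : 0 < β) :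
    IntegrableOn (fun x ↦ x ^ n * exp (-(β * x))) (Ioi 0) :=
  Integrable.of_integral_ne_zero (by rw [integral_pow_mul_exp_neg_mul_Ioi n hβ]; positivity)

lemma exp_neg_sq_div_two_le_one (x : ℝ) : exp (-x ^ 2 / 2) ≤ 1 :=
  exp_le_one_iff.2 (by nlinarith [sq_nonneg x])

lemma integrableOn_exp_neg_sq_div_two_mul_exp_neg_mul_Ioi {β : ℝ} (hβ : 0 < β) :
    IntegrableOn (fun x ↦ exp (-x ^ 2 / 2) * exp (-(β * x))) (Ioi 0) := by
  refine (integrableOn_pow_mul_exp_neg_mul_Ioi 0 hβ).mono'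
    (Continuous.aestronglyMeasurable (by fun_prop)) (ae_of_all _ fun x ↦ ?_)
  rw [norm_of_nonneg (by positivity), pow_zero, one_mul]
  exact mul_le_of_le_one_left (exp_pos _).le (exp_neg_sq_div_two_le_one x)

lemma integral_exp_neg_sq_div_two_mul_exp_neg_mul_Ioi_le {β : ℝ} (hβ : 0 < β) :
    ∫ x in Ioi 0, exp (-x ^ 2 / 2) * exp (-(β * x)) ≤ 1 / β :=
  calc ∫ x in Ioi 0, exp (-x ^ 2 / 2) * exp (-(β * x))
      ≤ ∫ x in Ioi 0, x ^ 0 * exp (-(β * x)) :=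
        integral_mono (integrableOn_exp_neg_sq_div_two_mul_exp_neg_mul_Ioi hβ)
          (integrableOn_pow_mul_exp_neg_mul_Ioi 0 hβ) fun x ↦ by
            rw [pow_zero, one_mul]
            exact mul_le_of_le_one_left (exp_pos _).le (exp_neg_sq_div_two_le_one x)
    _ = 1 / β := by rw [integral_pow_mul_exp_neg_mul_Ioi 0 hβ]; simp

lemma le_integral_exp_neg_sq_div_two_mul_exp_neg_mul_Ioi {β : ℝ} (hβ : 0 < β) :
    1 / β - 1 / β ^ 3 ≤ ∫ x in Ioi 0, exp (-x ^ 2 / 2) * exp (-(β * x)) := by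
  have h₀ := integrableOn_pow_mul_exp_neg_mul_Ioi 0 hβ
  have h₂ := (integrableOn_pow_mul_exp_neg_mul_Ioi 2 hβ).const_mul (1 / 2)
  calc 1 / β - 1 / β ^ 3
      = ∫ x in Ioi 0, x ^ 0 * exp (-(β * x)) - 1 / 2 * (x ^ 2 * exp (-(β * x))) := by
        rw [integral_sub h₀ h₂, integral_const_mul, integral_pow_mul_exp_neg_mul_Ioi 0 hβ,
          integral_pow_mul_exp_neg_mul_Ioi 2 hβ, Nat.factorial_zero, Nat.factorial_two]
        push_cast
        ring
    _ ≤ ∫ x in Ioi 0, exp (-x ^ 2 / 2) * exp (-(β * x)) :=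
        integral_mono (Integrable.sub h₀ h₂)
          (integrableOn_exp_neg_sq_div_two_mul_exp_neg_mul_Ioi hβ) fun x ↦
            calc x ^ 0 * exp (-(β * x)) - 1 / 2 * (x ^ 2 * exp (-(β * x)))
                = (-x ^ 2 / 2 + 1) * exp (-(β * x)) := by ring
              _ ≤ _ := mul_le_mul_of_nonneg_right (add_one_le_exp _) (exp_pos _).le

/-- Gaussian integral bounds (Lemma 13): for `z ~ N(0,1)` and `β > 0`,
(i) `(1/4)E[e^{-β|z|}] ≤ E[g''(βz)] ≤ min{1/2, E[e^{-β|z|}]}` and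
(ii) `(1/β)(1 - 1/β²)√(2/π) ≤ E[e^{-β|z|}] ≤ (1/β)√(2/π)`. -/
theorem stmt13 (β : ℝ) (hβ : 0 < β) :
    ((1 / 4) * ∫ z, Real.exp (-β * |z|) ∂(gaussianReal 0 1)
        ≤ ∫ z, logPartition'' (β * z) ∂(gaussianReal 0 1)
      ∧ ∫ z, logPartition'' (β * z) ∂(gaussianReal 0 1)
        ≤ min (1 / 2) (∫ z, Real.exp (-β * |z|) ∂(gaussianReal 0 1)))
    ∧ ((1 / β) * (1 - 1 / β ^ 2) * Real.sqrt (2 / π)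
        ≤ ∫ z, Real.exp (-β * |z|) ∂(gaussianReal 0 1)
      ∧ ∫ z, Real.exp (-β * |z|) ∂(gaussianReal 0 1) ≤ (1 / β) * Real.sqrt (2 / π)) := by
  have hexp_abs (z : ℝ) : exp (-β * |z|) = exp (-|β * z|) := by
    rw [abs_mul, abs_of_pos hβ, neg_mul]
  have hE : Integrable (fun z ↦ exp (-β * |z|)) (gaussianReal 0 1) :=
    .of_mem_Icc 0 1 (by fun_prop) (ae_of_all _ fun z ↦ by
      rw [hexp_abs]; exact Ioc_subset_Icc_self (exp_neg_abs_mem_Ioc _))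
  have hL : Integrable (fun z ↦ logPartition'' (β * z)) (gaussianReal 0 1) :=
    .of_mem_Icc 0 (1 / 4) (measurable_logPartition''.comp (by fun_prop)).aemeasurable
      (ae_of_all _ fun z ↦ ⟨logPartition''_nonneg _, logPartition''_le_quarter _⟩)
  have hlaplace : ∫ z, exp (-β * |z|) ∂gaussianReal 0 1
      = √(2 / π) * ∫ x in Ioi 0, exp (-x ^ 2 / 2) * exp (-(β * x)) := by
    simpa [neg_mul] using integral_gaussianReal_comp_abs (fun x ↦ exp (-(β * x))) one_ne_zero
  refine ⟨⟨?_, le_min ?_ ?_⟩, ?_, ?_⟩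
  · rw [← integral_const_mul]
    exact integral_mono (hE.const_mul _) hL fun z ↦ by
      rw [hexp_abs]; linarith [exp_neg_abs_div_four_le_logPartition'' (β * z)]
  · calc ∫ z, logPartition'' (β * z) ∂gaussianReal 0 1
        ≤ ∫ _, 1 / 4 ∂gaussianReal 0 1 :=
          integral_mono hL (integrable_const _) fun z ↦ logPartition''_le_quarter _
      _ ≤ 1 / 2 := by norm_num
  · exact integral_mono hL hE fun z ↦ by
      rw [hexp_abs]; exact logPartition''_le_exp_neg_abs _
  · rw [hlaplace]
    calc 1 / β * (1 - 1 / β ^ 2) * √(2 / π) = √(2 / π) * (1 / β - 1 / β ^ 3) := by ring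
      _ ≤ _ := by gcongr; exact le_integral_exp_neg_sq_div_two_mul_exp_neg_mul_Ioi hβ
  · rw [hlaplace, mul_comm]
    gcongr
    exact integral_exp_neg_sq_div_two_mul_exp_neg_mul_Ioi_le hβ
end
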